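/- For m ≥ 3, let H_m be the graph obtained from m disjoint copies of the cycle C₄ by selecting one vertex in each copy and identifying these m selected vertices into a single vertex. Then o(H_m) = 𝒩 and γ_MB(H_m) = γ(H_m) = m + 1. -/

import Mathlib

/-!
Formalization of the Maker-Breaker domination game (MBD game).

In the MBD game on a graph `G`, Dominator and Staller alternately select
previously unplayed vertices.  Dominator wins when the set of vertices he has
selected is a dominating set of `G`; Staller wins when she has selected a
vertex of every dominating set of `G`, which happens exactly when the closed
neighbourhood of some vertex is entirely contained in her set of selected
vertices.
-/

/-- `D` is a dominating set of `G` (as a finset of vertices). -/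
def IsDomSet {V : Type*} (G : SimpleGraph V) (D : Finset V) : Prop :=
  ∀ v, v ∈ D ∨ ∃ u ∈ D, G.Adj u v

/-- Staller (whose selected vertices form `S`) has won: she owns the whole
closed neighbourhood of some vertex, hence a vertex of every dominating set. -/
def StallerWon {V : Type*} (G : SimpleGraph V) (S : Finset V) : Prop :=
  ∃ v, v ∈ S ∧ ∀ u, G.Adj v u → u ∈ S

section Game

variable {V : Type*} [DecidableEq V]

mutual
  /-- Position with Dominator's vertices `D`, Staller's vertices `S` and
  Dominator to move: Dominator can guarantee to complete a dominating set
  using at most `k` further moves of his own. -/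
  inductive DomWinD (G : SimpleGraph V) : Finset V → Finset V → ℕ → Prop where
    | done (D S : Finset V) (k : ℕ) : IsDomSet G D → DomWinD G D S k
    | step (D S : Finset V) (k : ℕ) (v : V) : v ∉ D → v ∉ S →
        DomWinS G (insert v D) S k → DomWinD G D S (k + 1)

  /-- Position with Dominator's vertices `D`, Staller's vertices `S` and
  Staller to move: Dominator can guarantee to complete a dominating set
  using at most `k` further moves of his own. -/
  inductive DomWinS (G : SimpleGraph V) : Finset V → Finset V → ℕ → Prop where
    | done (D S : Finset V) (k : ℕ) : IsDomSet G D → DomWinS G D S k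
    | step (D S : Finset V) (k : ℕ) : (∃ w, w ∉ D ∧ w ∉ S) →
        (∀ w, w ∉ D → w ∉ S → DomWinD G D (insert w S) k) → DomWinS G D S k
end

mutual
  /-- Position with Dominator's vertices `D`, Staller's vertices `S` and
  Staller to move: Staller can guarantee to claim a whole closed neighbourhood
  using at most `k` further moves of her own. -/
  inductive StalWinS (G : SimpleGraph V) : Finset V → Finset V → ℕ → Prop where
    | done (D S : Finset V) (k : ℕ) : StallerWon G S → StalWinS G D S k
    | step (D S : Finset V) (k : ℕ) (w : V) : w ∉ D → w ∉ S →
        StalWinD G D (insert w S) k → StalWinS G D S (k + 1)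

  /-- Position with Dominator's vertices `D`, Staller's vertices `S` and
  Dominator to move: Staller can guarantee to claim a whole closed
  neighbourhood using at most `k` further moves of her own. -/
  inductive StalWinD (G : SimpleGraph V) : Finset V → Finset V → ℕ → Prop where
    | done (D S : Finset V) (k : ℕ) : StallerWon G S → StalWinD G D S k
    | step (D S : Finset V) (k : ℕ) : (∃ v, v ∉ D ∧ v ∉ S) →
        (∀ v, v ∉ D → v ∉ S → StalWinS G (insert v D) S k) → StalWinD G D S k
end

/-- `γ_MB(G)`: minimum number of Dominator's moves with which he can guarantee
to win the D-game (Dominator moves first); `⊤` if he cannot win it. -/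
noncomputable def gammaMB (G : SimpleGraph V) : ℕ∞ :=
  sInf {k : ℕ∞ | ∃ n : ℕ, k = n ∧ DomWinD G ∅ ∅ n}

/-- `γ_MB'(G)`: minimum number of Dominator's moves with which he can guarantee
to win the S-game (Staller moves first); `⊤` if he cannot win it. -/
noncomputable def gammaMB' (G : SimpleGraph V) : ℕ∞ :=
  sInf {k : ℕ∞ | ∃ n : ℕ, k = n ∧ DomWinS G ∅ ∅ n}

/-- `γ_SMB(G)`: minimum number of Staller's moves with which she can guarantee
to win the D-game (Dominator moves first); `⊤` if she cannot win it. -/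
noncomputable def gammaSMB (G : SimpleGraph V) : ℕ∞ :=
  sInf {k : ℕ∞ | ∃ n : ℕ, k = n ∧ StalWinD G ∅ ∅ n}

/-- `γ_SMB'(G)`: minimum number of Staller's moves with which she can guarantee
to win the S-game (Staller moves first); `⊤` if she cannot win it. -/
noncomputable def gammaSMB' (G : SimpleGraph V) : ℕ∞ :=
  sInf {k : ℕ∞ | ∃ n : ℕ, k = n ∧ StalWinS G ∅ ∅ n}

/-- Outcome `𝒟`: Dominator has a winning strategy no matter who starts. -/
def OutcomeD (G : SimpleGraph V) : Prop :=
  (∃ n, DomWinD G ∅ ∅ n) ∧ (∃ n, DomWinS G ∅ ∅ n)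

/-- Outcome `𝒮`: Staller has a winning strategy no matter who starts. -/
def OutcomeS (G : SimpleGraph V) : Prop :=
  (∃ n, StalWinD G ∅ ∅ n) ∧ (∃ n, StalWinS G ∅ ∅ n)

/-- Outcome `𝒩`: the first player has a winning strategy. -/
def OutcomeN (G : SimpleGraph V) : Prop :=
  (∃ n, DomWinD G ∅ ∅ n) ∧ (∃ n, StalWinS G ∅ ∅ n)

end Game

/-- The corona product `G ⊙ H`: one copy of `G`, a copy of `H` for every
vertex of `G`, and the `i`-th vertex of `G` joined to every vertex of the
`i`-th copy of `H`. -/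
def coronaProd {α β : Type*} (G : SimpleGraph α) (H : SimpleGraph β) :
    SimpleGraph (α ⊕ α × β) where
  Adj x y :=
    match x, y with
    | Sum.inl a, Sum.inl a' => G.Adj a a'
    | Sum.inl a, Sum.inr p => a = p.1
    | Sum.inr p, Sum.inl a => a = p.1
    | Sum.inr p, Sum.inr q => p.1 = q.1 ∧ H.Adj p.2 q.2
  symm := by
    constructor
    rintro (a | p) (a' | q) h
    · exact G.adj_symm h
    · exact h
    · exact h
    · exact ⟨h.1.symm, H.adj_symm h.2⟩
  loopless := by
    constructor
    rintro (a | p) h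
    · exact G.irrefl h
    · exact H.irrefl h.2

/-- The domination number `γ(G)` of a finite graph. -/
noncomputable def domNumber {V : Type*} [Fintype V] (G : SimpleGraph V) : ℕ :=
  sInf {n : ℕ | ∃ D : Finset V, D.card = n ∧ IsDomSet G D}

/-- `v` is a dominating vertex: it is adjacent to all other vertices. -/
def IsDomVertex {V : Type*} (G : SimpleGraph V) (v : V) : Prop :=
  ∀ u, u ≠ v → G.Adj v u

/-- `v` is an isolated vertex (degree `0`). -/
def IsIsolatedVertex {V : Type*} (G : SimpleGraph V) (v : V) : Prop :=
  ∀ u, ¬ G.Adj v u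

/-- `v` is a leaf (degree `1`). -/
def IsLeaf {V : Type*} (G : SimpleGraph V) (v : V) : Prop :=
  ∃! u, G.Adj v u

/-- `v` is a strong support vertex: adjacent to at least two leaves. -/
def IsStrongSupport {V : Type*} (G : SimpleGraph V) (v : V) : Prop :=
  ∃ u w, u ≠ w ∧ G.Adj v u ∧ G.Adj v w ∧ IsLeaf G u ∧ IsLeaf G w

/-- The graph `H_m`, `m ≥ 3`, obtained from `m` disjoint copies of `C₄` by
identifying one chosen vertex of each copy into a single vertex (`none` is the
identified vertex and, for each `i : Fin m`, the `i`-th copy of `C₄` is the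
cycle  `none — (i,0) — (i,1) — (i,2) — none`). -/
def Hgraph (m : ℕ) : SimpleGraph (Option (Fin m × Fin 3)) :=
  SimpleGraph.fromRel (fun x y =>
    (x = none ∧ ∃ i : Fin m, y = some (i, 0) ∨ y = some (i, 2)) ∨
    (∃ i : Fin m, x = some (i, 0) ∧ y = some (i, 1)) ∨
    (∃ i : Fin m, x = some (i, 1) ∧ y = some (i, 2)))


/-!
Write `c` for the identified vertex and `a_i, b_i, d_i` for the vertices `(i,0), (i,1), (i,2)`
of the `i`-th copy of `C₄`, so that `b_i` is the vertex opposite to `c`.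

Every dominating set meets each closed neighbourhood `N[b_i] = {a_i, b_i, d_i}`, and if it avoids
`c`, it has two vertices in a copy containing a neighbour of `c`; hence `γ ≥ m + 1`, with equality
for `{c, b_1, …, b_m}`. Dominator's final set in a won game is dominating, so `γ_MB ≥ γ`.
In the D-game Dominator takes `c` and then answers Staller inside each pair `{a_i, b_i}`, which
dominates after `m + 1` moves. In the S-game Staller takes `c`, then `b_i` in a copy Dominator
has not touched; this threatens both `N[a_i] = {a_i, b_i, c}` and `N[d_i] = {d_i, b_i, c}`.
-/

open Finset

section Domination

variable {V : Type*} {G : SimpleGraph V} [Fintype V]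

theorem domNumber_le_card {D : Finset V} (hD : IsDomSet G D) : domNumber G ≤ #D :=
  Nat.sInf_le ⟨D, rfl, hD⟩

theorem le_domNumber {k : ℕ} (h : ∀ D : Finset V, IsDomSet G D → k ≤ #D) : k ≤ domNumber G :=
  le_csInf ⟨_, univ, rfl, fun v => Or.inl (mem_univ v)⟩ fun _ ⟨D, hcard, hD⟩ => hcard ▸ h D hD

end Domination

section Game

variable {V : Type*} [DecidableEq V] {G : SimpleGraph V}

mutual

theorem DomWinD.exists_isDomSet_card_le {D S : Finset V} {n : ℕ} :
    DomWinD G D S n → ∃ D' : Finset V, IsDomSet G D' ∧ #D' ≤ #D + n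
  | .done _ _ _ hD => ⟨D, hD, by omega⟩
  | .step _ _ _ v _ _ h => by
      obtain ⟨D', hD', hcard⟩ := h.exists_isDomSet_card_le
      exact ⟨D', hD', by grind [card_insert_le v D]⟩

theorem DomWinS.exists_isDomSet_card_le {D S : Finset V} {n : ℕ} :
    DomWinS G D S n → ∃ D' : Finset V, IsDomSet G D' ∧ #D' ≤ #D + n
  | .done _ _ _ hD => ⟨D, hD, by omega⟩
  | .step _ _ _ ⟨w, hwD, hwS⟩ h => (h w hwD hwS).exists_isDomSet_card_le

end

theorem gammaMB_le {n : ℕ} (h : DomWinD G ∅ ∅ n) : gammaMB G ≤ n :=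
  sInf_le ⟨n, rfl, h⟩

theorem domNumber_le_gammaMB [Fintype V] : (domNumber G : ℕ∞) ≤ gammaMB G := by
  refine le_sInf ?_
  rintro _ ⟨n, rfl, h⟩
  obtain ⟨D, hD, hcard⟩ := h.exists_isDomSet_card_le
  exact_mod_cast (domNumber_le_card hD).trans (by simpa using hcard)

section Pairing

variable {ι : Type*} {x y : ι → V} {I : Finset ι}

/-- Dominator's answer to a Staller move `w` in the pairing strategy: the partner of `w` if `w`
lies in a pair, an arbitrary vertex of the pair `i₀` otherwise. -/
theorem exists_pairing_reply (hxy : ∀ i ∈ I, x i ≠ y i)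
    (hdisj : (I : Set ι).PairwiseDisjoint fun i => ({x i, y i} : Finset V))
    {i₀ : ι} (hi₀ : i₀ ∈ I) (w : V) :
    ∃ i ∈ I, ∃ v ∈ ({x i, y i} : Finset V), v ≠ w ∧
      ∀ j ∈ I, j ≠ i → w ∉ ({x j, y j} : Finset V) := by
  by_cases hw : ∃ i ∈ I, w ∈ ({x i, y i} : Finset V)
  · obtain ⟨i, hi, hwi⟩ := hw
    refine ⟨i, hi, if w = x i then y i else x i, by split_ifs <;> simp, ?_,
      fun j hj hji hwj => disjoint_left.mp (hdisj hj hi hji) hwj hwi⟩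
    have := hxy i hi
    split_ifs <;> grind
  · push Not at hw
    exact ⟨i₀, hi₀, x i₀, by simp, fun h => hw i₀ hi₀ (by simp [h]), fun j hj _ => hw j hj⟩

theorem DomWinS.of_pairing {D S : Finset V} (hxy : ∀ i ∈ I, x i ≠ y i)
    (hdisj : (I : Set ι).PairwiseDisjoint fun i => ({x i, y i} : Finset V))
    (hfree : ∀ i ∈ I, ∀ v ∈ ({x i, y i} : Finset V), v ∉ D ∧ v ∉ S)
    (hdom : ∀ D' : Finset V, D ⊆ D' → (∀ i ∈ I, x i ∈ D' ∨ y i ∈ D') → IsDomSet G D') :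
    DomWinS G D S #I := by
  classical
  induction hn : #I generalizing I D S with
  | zero => exact .done _ _ _ (hdom D subset_rfl (by simp_all))
  | succ n ih =>
    obtain ⟨i₀, hi₀⟩ : I.Nonempty := card_pos.mp (by omega)
    refine .step _ _ _ ⟨x i₀, hfree i₀ hi₀ _ (by simp)⟩ fun w _ _ => ?_
    obtain ⟨i, hi, v, hv, hvw, hw⟩ := exists_pairing_reply hxy hdisj hi₀ w
    refine .step _ _ _ v (hfree i hi v hv).1 (by simp [hvw, (hfree i hi v hv).2]) ?_
    refine ih (I := I.erase i) (fun j hj => hxy j (mem_of_mem_erase hj))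
      (hdisj.subset (by simp)) ?_ ?_ (by rw [card_erase_of_mem hi, hn]; rfl)
    · intro j hj u hu
      obtain ⟨hji, hj⟩ := mem_erase.mp hj
      have huv : u ≠ v := fun h => disjoint_left.mp (hdisj hj hi hji) hu (h ▸ hv)
      have huw : u ≠ w := fun h => hw j hj hji (h ▸ hu)
      simp [huv, huw, hfree j hj u hu]
    · intro D' hD' hcover
      refine hdom D' ((subset_insert v D).trans hD') fun j hj => ?_
      by_cases hji : j = i
      · subst hji
        have hvD' := hD' (mem_insert_self v D)
        simp only [mem_insert, mem_singleton] at hv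
        rcases hv with rfl | rfl
        exacts [Or.inl hvD', Or.inr hvD']
      · exact hcover j (mem_erase.mpr ⟨hji, hj⟩)

end Pairing

theorem stallerWon_insert {u : V} {S : Finset V} (h : ∀ z, G.Adj u z → z ∈ S) :
    StallerWon G (insert u S) :=
  ⟨u, mem_insert_self u S, fun z hz => mem_insert_of_mem (h z hz)⟩

theorem StalWinD.of_double_threat {D S : Finset V} {u w : V} (huw : u ≠ w)
    (hu : u ∉ D ∧ u ∉ S) (hw : w ∉ D ∧ w ∉ S)
    (hNu : ∀ z, G.Adj u z → z ∈ S) (hNw : ∀ z, G.Adj w z → z ∈ S) : StalWinD G D S 1 := by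
  refine .step _ _ _ ⟨u, hu⟩ fun v _ _ => ?_
  by_cases hvu : v = u
  · subst hvu
    exact .step _ _ _ w (by simp [huw.symm, hw.1]) hw.2 (.done _ _ _ (stallerWon_insert hNw))
  · exact .step _ _ _ u (by simp [Ne.symm hvu, hu.1]) hu.2 (.done _ _ _ (stallerWon_insert hNu))

end Game

namespace Hgraph

variable {m : ℕ}

theorem adj_none_some (i : Fin m) (t : Fin 3) : (Hgraph m).Adj none (some (i, t)) ↔ t ≠ 1 := by
  fin_cases t <;> simp [Hgraph]

theorem adj_some_some (i j : Fin m) (s t : Fin 3) :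
    (Hgraph m).Adj (some (i, s)) (some (j, t)) ↔ i = j ∧ (s = 1 ∧ t ≠ 1 ∨ s ≠ 1 ∧ t = 1) := by
  fin_cases s <;> fin_cases t <;> simp [Hgraph] <;> grind

theorem eq_none_or_eq_of_adj {i : Fin m} {t : Fin 3} (ht : t ≠ 1) {z : Option (Fin m × Fin 3)}
    (h : (Hgraph m).Adj (some (i, t)) z) : z = none ∨ z = some (i, 1) := by
  rcases z with _ | ⟨j, s⟩
  · exact Or.inl rfl
  · simp_all [adj_some_some]

theorem map_fst_eq_of_adj {i : Fin m} {z : Option (Fin m × Fin 3)}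
    (h : (Hgraph m).Adj z (some (i, 1))) : z.map Prod.fst = some i := by
  rcases z with _ | ⟨j, s⟩
  · simp [adj_none_some] at h
  · simp_all [adj_some_some]

theorem isDomSet_of_none_mem {D : Finset (Option (Fin m × Fin 3))} (hc : none ∈ D)
    (h : ∀ i, some (i, 0) ∈ D ∨ some (i, 1) ∈ D) : IsDomSet (Hgraph m) D := by
  rintro (_ | ⟨i, t⟩)
  · exact Or.inl hc
  by_cases ht : t = 1
  · subst ht
    exact (h i).symm.imp_right fun h0 => ⟨_, h0, by simp [adj_some_some]⟩
  · exact Or.inr ⟨none, hc, (adj_none_some i t).mpr ht⟩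

theorem domWinD : DomWinD (Hgraph m) ∅ ∅ (m + 1) := by
  refine .step _ _ _ none (by simp) (by simp) ?_
  have hpairs := DomWinS.of_pairing (G := Hgraph m) (I := (univ : Finset (Fin m)))
    (x := fun i => some (i, 0)) (y := fun i => some (i, 1)) (D := {none}) (S := ∅) (by simp)
    (fun i _ j _ hij => by simp [Function.onFun, hij.symm]) (by simp)
    fun D' hD' hcover =>
      isDomSet_of_none_mem (hD' (mem_singleton_self _)) fun i => hcover i (mem_univ i)
  simpa using hpairs

theorem stalWinS (hm : 2 ≤ m) : StalWinS (Hgraph m) ∅ ∅ 3 := by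
  have : Nontrivial (Fin m) := Fin.nontrivial_iff_two_le.mpr hm
  refine .step _ _ _ none (by simp) (by simp)
    (.step _ _ _ ⟨some (⟨0, by omega⟩, 1), by simp, by simp⟩ ?_)
  rintro (_ | ⟨j, t⟩) - hvS
  · simp at hvS
  obtain ⟨i, hij⟩ := exists_ne j
  have hthreat {s : Fin 3} (hs : s ≠ 1) (z : Option (Fin m × Fin 3))
      (hz : (Hgraph m).Adj (some (i, s)) z) : z ∈ ({some (i, 1), none} : Finset _) := by
    rcases eq_none_or_eq_of_adj hs hz with rfl | rfl <;> simp
  refine .step _ _ _ (some (i, 1)) (by simp [hij]) (by simp) ?_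
  exact StalWinD.of_double_threat (by simp) (by simp [hij]) (by simp [hij])
    (hthreat (s := 0) (by decide)) (hthreat (s := 2) (by decide))

theorem card_eq_card_none_add_sum_card_copy (D : Finset (Option (Fin m × Fin 3))) :
    #D = #{v ∈ D | v = none} + ∑ i, #{v ∈ D | v.map Prod.fst = some i} := by
  rw [card_eq_sum_card_fiberwise (f := Option.map Prod.fst) (t := univ) (by simp),
    Fintype.sum_option]
  simp

theorem card_copy_pos {D : Finset (Option (Fin m × Fin 3))} (hD : IsDomSet (Hgraph m) D)
    (i : Fin m) : 0 < #{v ∈ D | v.map Prod.fst = some i} := by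
  rcases hD (some (i, 1)) with h | ⟨u, hu, hadj⟩
  · exact card_pos.mpr ⟨_, mem_filter.mpr ⟨h, rfl⟩⟩
  · exact card_pos.mpr ⟨u, mem_filter.mpr ⟨hu, map_fst_eq_of_adj hadj⟩⟩

/-- A copy containing the dominator of `c` needs a second vertex to dominate its other
neighbour of `c`. -/
theorem exists_one_lt_card_copy {D : Finset (Option (Fin m × Fin 3))}
    (hD : IsDomSet (Hgraph m) D) (hc : none ∉ D) :
    ∃ i, 1 < #{v ∈ D | v.map Prod.fst = some i} := by
  obtain ⟨_ | ⟨i, t⟩, hu, hadj⟩ := (hD none).resolve_left hc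
  · exact absurd hu hc
  have ht : t ≠ 1 := (adj_none_some i t).mp hadj.symm
  obtain ⟨t', ht'1, ht't⟩ : ∃ t' : Fin 3, t' ≠ 1 ∧ t' ≠ t :=
    (by decide : ∀ t : Fin 3, t ≠ 1 → ∃ t', t' ≠ 1 ∧ t' ≠ t) t ht
  obtain ⟨w, hw, hwt, hwi⟩ : ∃ w ∈ D, w ≠ some (i, t) ∧ w.map Prod.fst = some i := by
    rcases hD (some (i, t')) with h | ⟨w, hw, hadj'⟩
    · exact ⟨_, h, by simp [ht't], rfl⟩
    · rcases eq_none_or_eq_of_adj ht'1 hadj'.symm with rfl | rfl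
      · exact absurd hw hc
      · exact ⟨_, hw, by simp [ht.symm], rfl⟩
  exact ⟨i, one_lt_card.mpr ⟨_, mem_filter.mpr ⟨hu, rfl⟩, w, mem_filter.mpr ⟨hw, hwi⟩, hwt.symm⟩⟩

theorem le_card_of_isDomSet {D : Finset (Option (Fin m × Fin 3))} (hD : IsDomSet (Hgraph m) D) :
    m + 1 ≤ #D := by
  rw [card_eq_card_none_add_sum_card_copy]
  have hm : ∑ _i : Fin m, 1 = m := by simp
  by_cases hc : none ∈ D
  · have hnone : 0 < #{v ∈ D | v = none} := card_pos.mpr ⟨none, by simp [hc]⟩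
    have hsum := sum_le_sum (f := fun _ => 1) fun i (_ : i ∈ univ) => card_copy_pos hD i
    omega
  · obtain ⟨i, hi⟩ := exists_one_lt_card_copy hD hc
    have hsum := sum_lt_sum (f := fun _ => 1) (fun j (_ : j ∈ univ) => card_copy_pos hD j)
      ⟨i, mem_univ i, hi⟩
    omega

theorem domNumber_eq : domNumber (Hgraph m) = m + 1 := by
  refine le_antisymm ?_ (le_domNumber fun D hD => le_card_of_isDomSet hD)
  let D₀ : Finset (Option (Fin m × Fin 3)) := insert none (univ.image fun i => some (i, 1))
  have hD₀ : IsDomSet (Hgraph m) D₀ :=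
    isDomSet_of_none_mem (mem_insert_self _ _) fun i => Or.inr (by simp [D₀])
  calc domNumber (Hgraph m) ≤ #D₀ := domNumber_le_card hD₀
    _ ≤ #(univ.image fun i : Fin m => (some (i, 1) : Option (Fin m × Fin 3))) + 1 :=
      card_insert_le _ _
    _ ≤ m + 1 := by grw [card_image_le, card_univ, Fintype.card_fin]

end Hgraph

/-- For `m ≥ 3`: `o(H_m) = 𝒩` and `γ_MB(H_m) = γ(H_m) = m + 1`. -/
theorem Hgraph_outcome_and_gammaMB (m : ℕ) (hm : 3 ≤ m) :
    OutcomeN (Hgraph m) ∧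
    gammaMB (Hgraph m) = ((m + 1 : ℕ) : ℕ∞) ∧
    domNumber (Hgraph m) = m + 1 := by
  refine ⟨⟨⟨m + 1, Hgraph.domWinD⟩, ⟨3, Hgraph.stalWinS (by omega)⟩⟩,
    le_antisymm (gammaMB_le Hgraph.domWinD) ?_, Hgraph.domNumber_eq⟩
  rw [← Hgraph.domNumber_eq]
  exact domNumber_le_gammaMB
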